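/- arXiv:2105.10714 — 2 statements merged into one kernel-verified Lean document; each statement's English description precedes it below -/
import Mathlib

section
/- Let f be a polynomial in C[x_1,...,x_d], let α be a nonzero complex number, and let q and r be the quotient and remainder of polynomial division of f by (x_i - α), so that f = q·(x_i - α) + r with r not involving x_i. Then the Newton polytope of q is contained in Q_i(N(f)) and the Newton polytope of r is contained in R_i(N(f)). -/
open Pointwise

/-- The `i`-th standard basis vector in `ℝ^d`. -/
def stdBasis (d : ℕ) (i : Fin d) : Fin d → ℝ := fun j => if j = i then 1 else 0

/-- The lattice points of a subset of `ℝ^d`. -/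
def latticePoints {d : ℕ} (P : Set (Fin d → ℝ)) : Set (Fin d → ℝ) :=
  {x ∈ P | ∀ j, ∃ n : ℤ, x j = (n : ℝ)}

/-- The quotient polytope `Q_i(P)`. -/
def polyQuot {d : ℕ} (i : Fin d) (P : Set (Fin d → ℝ)) : Set (Fin d → ℝ) :=
  convexHull ℝ {y | ∃ x ∈ latticePoints P, 0 < x i ∧
    (y = x - stdBasis d i ∨ y = x - (x i) • stdBasis d i)}

/-- The remainder polytope `R_i(P)`. -/
def polyRem {d : ℕ} (i : Fin d) (P : Set (Fin d → ℝ)) : Set (Fin d → ℝ) :=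
  convexHull ℝ {y | ∃ x ∈ latticePoints P, y = x - (x i) • stdBasis d i}

/-- `P` is a lattice polytope: the convex hull of finitely many integer points. -/
def IsLatticePolytope {d : ℕ} (P : Set (Fin d → ℝ)) : Prop :=
  ∃ V : Finset (Fin d → ℤ),
    P = convexHull ℝ ((fun v : Fin d → ℤ => fun j => ((v j : ℤ) : ℝ)) '' (V : Set (Fin d → ℤ)))

/-- The Newton polytope of a multivariate polynomial. -/
noncomputable def newtonPolytope {d : ℕ} (f : MvPolynomial (Fin d) ℂ) : Set (Fin d → ℝ) :=
  convexHull ℝ ((fun a : Fin d →₀ ℕ => fun j => ((a j : ℕ) : ℝ)) '' (f.support : Set (Fin d →₀ ℕ)))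

/-!
Fix the exponents of all variables other than `x_i` and let `f_k, q_k` be the coefficients of
`x_i^k` along that line. Comparing coefficients in `f = q (x_i - α) + r`, where `r` only
contributes at `k = 0`, gives `q_k = f_{k+1} + α q_{k+1}` and `r_0 = f_0 + α q_0`. Unrolling the
first relation upwards until `q` vanishes, each `q_j ≠ 0` forces some `f_k ≠ 0` with `k > j`;
then the exponent of `q_j` lies on the segment from `x - e_i` to `x - x_i e_i`, where `x` is the
exponent of `f_k`. Every `r_0 ≠ 0` comes from `f_0 ≠ 0` or `q_0 ≠ 0`, so its exponent is
`x - x_i e_i` for an exponent `x` of `f`.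
-/

namespace MvPolynomial

variable {σ R : Type*} [CommRing R]

theorem coeff_update_succ_mul_X_sub_C (q : MvPolynomial σ R) (i : σ) (α : R) (a : σ →₀ ℕ)
    (k : ℕ) :
    (q * (X i - C α)).coeff (a.update i (k + 1)) =
      q.coeff (a.update i k) - α * q.coeff (a.update i (k + 1)) := by
  classical
  have hsub : a.update i (k + 1) - Finsupp.single i 1 = a.update i k := by
    ext j
    rcases eq_or_ne j i with rfl | hj
    · simp
    · simp [Finsupp.update_apply, hj]
  rw [mul_sub, coeff_sub, coeff_mul_X', if_pos (by simp), hsub, mul_comm, coeff_C_mul]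

theorem coeff_mul_X_sub_C_of_apply_eq_zero (q : MvPolynomial σ R) (i : σ) (α : R)
    {a : σ →₀ ℕ} (ha : a i = 0) :
    (q * (X i - C α)).coeff a = -(α * q.coeff a) := by
  classical
  rw [mul_sub, coeff_sub, coeff_mul_X', if_neg (by simpa using ha), mul_comm, coeff_C_mul,
    zero_sub]

section Division

variable {f q r : MvPolynomial σ R} {i : σ} {α : R}

theorem coeff_update_of_eq_mul_X_sub_C_add (hdiv : f = q * (X i - C α) + r)
    (hr : ∀ a ∈ r.support, a i = 0) (a : σ →₀ ℕ) (k : ℕ) :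
    q.coeff (a.update i k) = f.coeff (a.update i (k + 1)) + α * q.coeff (a.update i (k + 1)) := by
  classical
  have hr0 : r.coeff (a.update i (k + 1)) = 0 :=
    notMem_support_iff.mp fun h => by simpa [Finsupp.update_apply] using hr _ h
  rw [hdiv, coeff_add, coeff_update_succ_mul_X_sub_C, hr0]
  ring

theorem exists_lt_update_mem_support_of_mem_support_quotient (hdiv : f = q * (X i - C α) + r)
    (hr : ∀ a ∈ r.support, a i = 0) {a : σ →₀ ℕ} (ha : a ∈ q.support) :
    ∃ k, a i < k ∧ a.update i k ∈ f.support := by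
  classical
  by_contra! hf
  have hpow : ∀ n, q.coeff a = α ^ n * q.coeff (a.update i (a i + n)) := by
    intro n
    induction n with
    | zero => simp
    | succ n ih =>
      have hstep := coeff_update_of_eq_mul_X_sub_C_add hdiv hr a (a i + n)
      rw [notMem_support_iff.mp (hf _ (by omega)), zero_add] at hstep
      rw [ih, hstep, ← add_assoc]
      ring
  have hvanish : q.coeff (a.update i (a i + (q.degreeOf i + 1))) = 0 :=
    notMem_support_iff.mp fun hm => by
      have := monomial_le_degreeOf i hm
      rw [Finsupp.update_apply, if_pos rfl] at this
      omega
  exact mem_support_iff.mp ha (by rw [hpow, hvanish, mul_zero])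

theorem exists_update_mem_support_of_mem_support_remainder (hdiv : f = q * (X i - C α) + r)
    (hr : ∀ a ∈ r.support, a i = 0) {a : σ →₀ ℕ} (ha : a ∈ r.support) :
    ∃ k, a.update i k ∈ f.support := by
  have hai := hr a ha
  have hcoeff : r.coeff a = f.coeff a + α * q.coeff a := by
    rw [hdiv, coeff_add, coeff_mul_X_sub_C_of_apply_eq_zero q i α hai]
    ring
  by_cases hfa : a ∈ f.support
  · exact ⟨a i, by rwa [Finsupp.update_self]⟩
  · have hqa : a ∈ q.support := by
      rw [mem_support_iff] at ha ⊢
      rw [notMem_support_iff.mp hfa, zero_add] at hcoeff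
      exact right_ne_zero_of_mul (hcoeff ▸ ha)
    obtain ⟨k, -, hk⟩ := exists_lt_update_mem_support_of_mem_support_quotient hdiv hr hqa
    exact ⟨k, hk⟩

end Division

end MvPolynomial

open MvPolynomial

def exponentVector {σ : Type*} (a : σ →₀ ℕ) : σ → ℝ := fun j => a j

theorem exponentVector_update {σ : Type*} [DecidableEq σ] (a : σ →₀ ℕ) (i : σ) (k : ℕ) :
    exponentVector (a.update i k) = Function.update (exponentVector a) i k := by
  ext j
  by_cases hj : j = i <;> simp [exponentVector, Finsupp.update_apply, hj]

theorem exponentVector_eq_update {σ : Type*} [DecidableEq σ] (a : σ →₀ ℕ) (i : σ) (k : ℕ) :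
    exponentVector a = Function.update (exponentVector (a.update i k)) i (a i) := by
  rw [exponentVector_update, Function.update_idem]
  exact (Function.update_eq_self i _).symm

theorem newtonPolytope_eq_convexHull {d : ℕ} (f : MvPolynomial (Fin d) ℂ) :
    newtonPolytope f = convexHull ℝ (exponentVector '' f.support) := rfl

theorem exponentVector_mem_latticePoints {d : ℕ} {f : MvPolynomial (Fin d) ℂ} {a : Fin d →₀ ℕ}
    (ha : a ∈ f.support) : exponentVector a ∈ latticePoints (newtonPolytope f) :=
  ⟨subset_convexHull ℝ _ ⟨a, ha, rfl⟩, fun j => ⟨a j, by simp [exponentVector]⟩⟩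

theorem sub_smul_stdBasis {d : ℕ} (x : Fin d → ℝ) (i : Fin d) (c : ℝ) :
    x - c • stdBasis d i = Function.update x i (x i - c) := by
  ext j
  by_cases hj : j = i
  · subst hj; simp [stdBasis]
  · simp [stdBasis, hj]

theorem update_zero_mem_polyRem {d : ℕ} {P : Set (Fin d → ℝ)} {x : Fin d → ℝ}
    (hx : x ∈ latticePoints P) (i : Fin d) : Function.update x i 0 ∈ polyRem i P :=
  subset_convexHull ℝ _ ⟨x, hx, by rw [sub_smul_stdBasis, sub_self]⟩

theorem update_mem_polyQuot {d : ℕ} {P : Set (Fin d → ℝ)} {x : Fin d → ℝ}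
    (hx : x ∈ latticePoints P) (i : Fin d) {t : ℝ} (ht₀ : 0 ≤ t) (ht₁ : t ≤ x i - 1) :
    Function.update x i t ∈ polyQuot i P := by
  have hxi : 0 < x i := by linarith
  have hlower : Function.update x i (x i - 1) ∈ polyQuot i P :=
    subset_convexHull ℝ _
      ⟨x, hx, hxi, Or.inl (by rw [← one_smul ℝ (stdBasis d i), sub_smul_stdBasis])⟩
  have hupper : Function.update x i 0 ∈ polyQuot i P :=
    subset_convexHull ℝ _ ⟨x, hx, hxi, Or.inr (by rw [sub_smul_stdBasis, sub_self])⟩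
  have hseg : t ∈ segment ℝ (x i - 1) 0 := by
    rw [segment_symm, segment_eq_Icc (by linarith)]
    exact ⟨ht₀, ht₁⟩
  refine (convex_convexHull ℝ _).segment_subset hlower hupper ?_
  rw [← Pi.image_update_segment]
  exact ⟨t, hseg, rfl⟩

theorem newtonPolytope_subset_of_forall_mem {d : ℕ} {f : MvPolynomial (Fin d) ℂ}
    {S : Set (Fin d → ℝ)} (hS : Convex ℝ S) (h : ∀ a ∈ f.support, exponentVector a ∈ S) :
    newtonPolytope f ⊆ S := by
  rw [newtonPolytope_eq_convexHull]
  exact convexHull_min (Set.image_subset_iff.mpr h) hS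

theorem newton_polytope_of_division_general {d : ℕ} (i : Fin d) (f q r : MvPolynomial (Fin d) ℂ)
    (α : ℂ)
    (hdiv : f = q * (MvPolynomial.X i - MvPolynomial.C α) + r)
    (hr : ∀ a ∈ r.support, a i = 0) :
    newtonPolytope q ⊆ polyQuot i (newtonPolytope f) ∧
      newtonPolytope r ⊆ polyRem i (newtonPolytope f) := by
  constructor
  · refine newtonPolytope_subset_of_forall_mem (convex_convexHull ℝ _) fun a ha => ?_
    obtain ⟨k, hk, hf⟩ := exists_lt_update_mem_support_of_mem_support_quotient hdiv hr ha
    have hk' : (a i : ℝ) + 1 ≤ k := by exact_mod_cast hk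
    rw [exponentVector_eq_update a i k]
    exact update_mem_polyQuot (exponentVector_mem_latticePoints hf) i (by positivity)
      (by rw [exponentVector_update, Function.update_self]; linarith)
  · refine newtonPolytope_subset_of_forall_mem (convex_convexHull ℝ _) fun a ha => ?_
    obtain ⟨k, hf⟩ := exists_update_mem_support_of_mem_support_remainder hdiv hr ha
    rw [exponentVector_eq_update a i k, hr a ha, Nat.cast_zero]
    exact update_zero_mem_polyRem (exponentVector_mem_latticePoints hf) i

/-- If `f = q·(x_i - α) + r` with `r` not involving `x_i` and `α ≠ 0`, then
`N(q) ⊆ Q_i(N(f))` and `N(r) ⊆ R_i(N(f))`. -/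
theorem newton_polytope_of_division {d : ℕ} (i : Fin d) (f q r : MvPolynomial (Fin d) ℂ)
    (α : ℂ) (hα : α ≠ 0)
    (hdiv : f = q * (MvPolynomial.X i - MvPolynomial.C α) + r)
    (hr : ∀ a ∈ r.support, a i = 0) :
    newtonPolytope q ⊆ polyQuot i (newtonPolytope f) ∧
      newtonPolytope r ⊆ polyRem i (newtonPolytope f) :=
  newton_polytope_of_division_general i f q r α hdiv hr
end

section
/- Let P ⊂ R^d be a lattice polytope that is not contained in {x_i = 0}. If P is i-saturated, then P ∩ {x : ⟨e_i, x⟩ = 0} is a lattice polytope, namely the convex hull of those lattice points of P with vanishing i-th coordinate together with the projections of all other lattice points of P, i.e., P ∩ {x_i = 0} = R_i(P). -/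
open Pointwise

/-- `P` is `i`-saturated. -/
def ISaturated {d : ℕ} (i : Fin d) (P : Set (Fin d → ℝ)) : Prop :=
  (∀ x ∈ latticePoints P, x i = 0) ∨
    P = convexHull ℝ ((polyQuot i P + segment ℝ 0 (stdBasis d i)) ∪ polyRem i P)

/-- The hyperplane `{x | x i = 0}` is convex. -/
lemma convex_hyp {d : ℕ} (i : Fin d) : Convex ℝ {x : Fin d → ℝ | x i = 0} := by
  intro x hx y hy a b _ _ _
  simp only [Set.mem_setOf_eq] at *
  simp [hx, hy]

/-- The halfspace `{x | 0 ≤ x i}` is convex. -/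
lemma convex_half {d : ℕ} (i : Fin d) : Convex ℝ {x : Fin d → ℝ | 0 ≤ x i} := by
  intro x hx y hy a b ha hb _
  simp only [Set.mem_setOf_eq] at *
  have : (a • x + b • y) i = a * x i + b * y i := by simp
  rw [this]
  exact add_nonneg (mul_nonneg ha hx) (mul_nonneg hb hy)

/-- Slicing a convex hull by a supporting coordinate hyperplane. -/
lemma hull_slice {d : ℕ} (i : Fin d) (s : Set (Fin d → ℝ)) (hs : ∀ x ∈ s, 0 ≤ x i)
    {p : Fin d → ℝ} (hp : p ∈ convexHull ℝ s) (h0 : p i = 0) :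
    p ∈ convexHull ℝ {x ∈ s | x i = 0} := by
  rw [convexHull_eq] at hp
  obtain ⟨ι, t, w, z, hw, hw1, hz, hcm⟩ := hp
  have hsum : ∑ j ∈ t, w j * z j i = 0 := by
    have h := congrFun hcm i
    rw [Finset.centerMass, hw1, inv_one, one_smul] at h
    rw [← h0, ← h, Finset.sum_apply]
    simp
  have hterm : ∀ k ∈ t, 0 ≤ w k * z k i := fun k hk =>
    mul_nonneg (hw k hk) (hs _ (hz k hk))
  have hz0 : ∀ j ∈ t, w j ≠ 0 → z j i = 0 := by
    intro j hj hwj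
    have h := (Finset.sum_eq_zero_iff_of_nonneg hterm).mp hsum j hj
    rcases mul_eq_zero.mp h with h' | h'
    · exact absurd h' hwj
    · exact h'
  rw [← hcm, ← Finset.centerMass_filter_ne_zero]
  apply Finset.centerMass_mem_convexHull
  · intro j hj
    exact hw j (Finset.mem_filter.mp hj).1
  · rw [Finset.sum_filter_ne_zero, hw1]
    exact one_pos
  · intro j hj
    obtain ⟨hjt, hwj⟩ := Finset.mem_filter.mp hj
    exact ⟨hz j hjt, hz0 j hjt hwj⟩

/-- If `P` is an `i`-saturated lattice polytope not contained in `{x_i = 0}`, then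
`P ∩ {x_i = 0} = R_i(P)`. -/
theorem slice_eq_rem_of_saturated {d : ℕ} (i : Fin d) (P : Set (Fin d → ℝ))
    (hP : IsLatticePolytope P) (hnot : ¬ P ⊆ {x | x i = 0}) (hsat : ISaturated i P) :
    P ∩ {x | x i = 0} = polyRem i P := by
  obtain ⟨V, hV⟩ := hP
  have hei : stdBasis d i i = 1 := by simp [stdBasis]
  -- rule out the degenerate case of saturation
  rcases hsat with h0 | hPeq
  · exfalso
    apply hnot
    rw [hV]
    apply convexHull_min _ (convex_hyp i)
    rintro x ⟨v, hv, rfl⟩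
    apply h0
    refine ⟨?_, fun j => ⟨v j, rfl⟩⟩
    rw [hV]
    exact subset_convexHull ℝ _ ⟨v, hv, rfl⟩
  -- generator sets
  set QS : Set (Fin d → ℝ) := {y | ∃ x ∈ latticePoints P, 0 < x i ∧
    (y = x - stdBasis d i ∨ y = x - (x i) • stdBasis d i)} with hQSdef
  set RS : Set (Fin d → ℝ) := {y | ∃ x ∈ latticePoints P, y = x - (x i) • stdBasis d i}
    with hRSdef
  have hRS0 : ∀ y ∈ RS, y i = 0 := by
    rintro y ⟨x, hx, rfl⟩
    simp [hei]
  have hR0 : ∀ y ∈ polyRem i P, y i = 0 := by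
    intro y hy
    exact convexHull_min hRS0 (convex_hyp i) hy
  have hQS0 : ∀ y ∈ QS, 0 ≤ y i := by
    rintro y ⟨x, hx, hxi, hc | hc⟩
    · -- y = x - e; x i is a positive integer, hence ≥ 1
      obtain ⟨n, hn⟩ := hx.2 i
      have hn1 : (1 : ℝ) ≤ x i := by
        rw [hn] at hxi ⊢
        have h' : (0 : ℤ) < n := by exact_mod_cast hxi
        exact_mod_cast h'
      subst hc
      simp only [Pi.sub_apply, hei]
      linarith
    · subst hc
      simp [hei]
  have hQ0 : ∀ y ∈ polyQuot i P, 0 ≤ y i := by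
    intro y hy
    exact convexHull_min hQS0 (convex_half i) hy
  have hseg0 : ∀ v ∈ segment ℝ (0 : Fin d → ℝ) (stdBasis d i), 0 ≤ v i ∧
      (v i = 0 → v = 0) := by
    rintro v ⟨a, b, ha, hb, hab, rfl⟩
    constructor
    · simp [hei, hb]
    · intro hv0
      have hb0 : b = 0 := by
        have : (a • (0 : Fin d → ℝ) + b • stdBasis d i) i = b := by simp [hei]
        rw [hv0] at this
        exact this.symm
      simp [hb0]
  set A : Set (Fin d → ℝ) := (polyQuot i P + segment ℝ 0 (stdBasis d i)) ∪ polyRem i P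
    with hAdef
  have hA0 : ∀ a ∈ A, 0 ≤ a i := by
    rintro a (ha | ha)
    · obtain ⟨q, hq, v, hv, rfl⟩ := ha
      have := (hseg0 v hv).1
      have := hQ0 q hq
      simp only [Pi.add_apply]
      linarith
    · rw [hR0 a ha]
  apply Set.eq_of_subset_of_subset
  · -- P ∩ {x_i = 0} ⊆ R
    rintro p ⟨hpP, hpi⟩
    simp only [Set.mem_setOf_eq] at hpi
    rw [hPeq] at hpP
    have hp' := hull_slice i A hA0 hpP hpi
    refine convexHull_min ?_ (convex_convexHull ℝ _) hp'
    rintro a ⟨haA, hai⟩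
    rcases haA with ha | ha
    · -- a ∈ Q + segment, with a i = 0
      obtain ⟨q, hq, v, hv, rfl⟩ := ha
      have hqi : 0 ≤ q i := hQ0 q hq
      have hvi : 0 ≤ v i := (hseg0 v hv).1
      have hqv : q i + v i = 0 := hai
      have hq0 : q i = 0 := by linarith
      have hv0 : v = 0 := (hseg0 v hv).2 (by linarith)
      rw [hv0]
      show q + 0 ∈ _
      rw [add_zero]
      -- now q ∈ Q with q i = 0 : slice again
      have hq' := hull_slice i QS hQS0 hq hq0
      refine convexHull_min ?_ (convex_convexHull ℝ _) hq'
      rintro y ⟨⟨x, hx, hxi, hc | hc⟩, hyi⟩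
      · -- y = x - e and y i = 0, so x i = 1 and y = x - (x i) • e
        have hxi1 : x i = 1 := by
          subst hc
          simp only [Pi.sub_apply, hei] at hyi
          linarith
        apply subset_convexHull ℝ _
        exact ⟨x, hx, by rw [hc, hxi1, one_smul]⟩
      · exact subset_convexHull ℝ _ ⟨x, hx, hc⟩
    · exact ha
  · -- R ⊆ P ∩ {x_i = 0}
    intro y hy
    refine ⟨?_, hR0 y hy⟩
    rw [hPeq]
    exact subset_convexHull ℝ _ (Or.inr hy)
end
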